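/- arXiv:2102.04396 — 3 statements merged into one kernel-verified Lean document; each statement's English description precedes it below -/
import Mathlib

section
/- Let μ_MP be the Marchenko–Pastur law with ratio r ∈ (0,∞): dμ_MP(λ) = max{1 − 1/r, 0}·δ₀(λ) + √((λ−λ⁻)(λ⁺−λ))/(2πλr)·1_{[λ⁻,λ⁺]}(λ) dλ with λ± = (1 ± √r)². Let m be the Stieltjes transform of the semicircle law. Then for any p ∈ ℂ \ [−λ⁺, −λ⁻], ∫₀^∞ x/(x+p) dμ_MP(x) = m(q)/√r, where q = −(p + 1 + r)/√r. -/
/-!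
The atom at `0` does not see the integrand `x / (x + p)`, and on the bulk the factor `x` cancels
the `1 / x` of the density, leaving `(2πr)⁻¹ ∫_{λ⁻}^{λ⁺} √((x - λ⁻)(λ⁺ - x)) / (x + p) dx`; here
`p ∉ [-λ⁺, -λ⁻]` makes the integrand continuous, hence integrable. Since `λ± = 1 + r ± 2√r`, the
substitution `x = 1 + r + √r y` maps `[-2, 2]` onto `[λ⁻, λ⁺]`, turns the square root into
`√r √(4 - y²)` and `x + p` into `√r (y - q)`.
-/

open MeasureTheory

/-- The Marchenko–Pastur law with ratio `r`: an atom of mass `max{1 − 1/r, 0}` at `0`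
plus the density `√((λ−λ⁻)(λ⁺−λ))/(2πλr)` on `[λ⁻, λ⁺]`, `λ± = (1 ± √r)²`. -/
noncomputable def mpMeasure (r : ℝ) : Measure ℝ :=
  ENNReal.ofReal (max (1 - 1 / r) 0) • Measure.dirac 0 +
    MeasureTheory.volume.withDensity (fun x =>
      ENNReal.ofReal
        (Set.indicator (Set.Icc ((1 - Real.sqrt r) ^ 2) ((1 + Real.sqrt r) ^ 2))
          (fun y =>
            Real.sqrt ((y - (1 - Real.sqrt r) ^ 2) * ((1 + Real.sqrt r) ^ 2 - y)) /
              (2 * Real.pi * y * r)) x))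

/-- The Stieltjes transform of the semicircle law,
`m(z) = (1/2π) ∫_{−2}^{2} √(4−y²)/(y−z) dy`. -/
noncomputable def scStieltjes (z : ℂ) : ℂ :=
  (1 / (2 * (Real.pi : ℂ))) * ∫ y in (-2 : ℝ)..2, (Real.sqrt (4 - y ^ 2) : ℂ) / ((y : ℂ) - z)

open Set Real

section WithDensity

variable {α E : Type*} [NormedAddCommGroup E] [NormedSpace ℝ E] {s : Set α} {g : α → ℝ}

lemma toReal_ofReal_indicator_smul (hg : ∀ x ∈ s, 0 ≤ g x) (f : α → E) (x : α) :
    (ENNReal.ofReal (s.indicator g x)).toReal • f x = s.indicator (fun x => g x • f x) x := by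
  by_cases hx : x ∈ s
  · simp [hx, ENNReal.toReal_ofReal (hg x hx)]
  · simp [hx]

variable [MeasurableSpace α] {μ : Measure α}

lemma integrable_withDensity_ofReal_indicator (hs : MeasurableSet s) (hgm : Measurable g)
    (hg : ∀ x ∈ s, 0 ≤ g x) {f : α → E} (hf : IntegrableOn (fun x => g x • f x) s μ) :
    Integrable f (μ.withDensity fun x => ENNReal.ofReal (s.indicator g x)) := by
  rw [integrable_withDensity_iff_integrable_smul' (by fun_prop)
    (ae_of_all _ fun _ => ENNReal.ofReal_lt_top)]
  simp_rw [toReal_ofReal_indicator_smul hg]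
  exact hf.integrable_indicator hs

lemma integral_withDensity_ofReal_indicator (hs : MeasurableSet s) (hgm : Measurable g)
    (hg : ∀ x ∈ s, 0 ≤ g x) (f : α → E) :
    ∫ x, f x ∂μ.withDensity (fun x => ENNReal.ofReal (s.indicator g x))
      = ∫ x in s, g x • f x ∂μ := by
  rw [integral_withDensity_eq_integral_toReal_smul (by fun_prop)
    (ae_of_all _ fun _ => ENNReal.ofReal_lt_top)]
  simp_rw [toReal_ofReal_indicator_smul hg]
  exact integral_indicator hs

end WithDensity

theorem integral_sqrt_div_add_eq_scStieltjes {s : ℝ} (hs : 0 < s) (c : ℝ) (p : ℂ) :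
    ∫ x in (c - 2 * s)..(c + 2 * s), (√((x - (c - 2 * s)) * (c + 2 * s - x)) : ℂ) / ((x : ℂ) + p)
      = 2 * π * s * scStieltjes (-(p + c) / s) := by
  have hsC : (s : ℂ) ≠ 0 := by exact_mod_cast hs.ne'
  have hsub := intervalIntegral.integral_comp_mul_add
    (fun x : ℝ => (√((x - (c - 2 * s)) * (c + 2 * s - x)) : ℂ) / ((x : ℂ) + p)) hs.ne' c
    (a := -2) (b := 2)
  have hlo : s * -2 + c = c - 2 * s := by ring
  have hhi : s * 2 + c = c + 2 * s := by ring
  rw [hlo, hhi] at hsub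
  have hpt : ∀ y : ℝ, (√((s * y + c - (c - 2 * s)) * (c + 2 * s - (s * y + c))) : ℂ)
      / (((s * y + c : ℝ) : ℂ) + p) = (√(4 - y ^ 2) : ℂ) / ((y : ℂ) - (-(p + c) / s)) := by
    intro y
    have hrad : (s * y + c - (c - 2 * s)) * (c + 2 * s - (s * y + c)) = s ^ 2 * (4 - y ^ 2) := by
      ring
    rw [hrad, Real.sqrt_mul (sq_nonneg s), Real.sqrt_sq hs.le]
    push_cast
    rw [show ((s : ℂ) * y + c + p) = s * (y - (-(p + c) / s)) by field_simp; ring]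
    rw [mul_div_mul_left _ _ hsC]
  simp_rw [hpt] at hsub
  have hπ : (π : ℂ) ≠ 0 := by exact_mod_cast pi_ne_zero
  rw [scStieltjes, hsub, Complex.real_smul]
  push_cast
  field_simp

lemma integral_div_add_mpMeasure {r : ℝ} (hr : 0 ≤ r) {p : ℂ}
    (hp : ∀ x : ℝ, x ∈ Icc ((1 - √r) ^ 2) ((1 + √r) ^ 2) → (x : ℂ) + p ≠ 0) :
    ∫ x : ℝ, (x : ℂ) / ((x : ℂ) + p) ∂(mpMeasure r)
      = (∫ x in (1 - √r) ^ 2..(1 + √r) ^ 2,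
          (√((x - (1 - √r) ^ 2) * ((1 + √r) ^ 2 - x)) : ℂ) / ((x : ℂ) + p)) / (2 * π * r) := by
  set a := (1 - √r) ^ 2
  set b := (1 + √r) ^ 2
  set g : ℝ → ℝ := fun x => √((x - a) * (b - x)) / (2 * π * x * r)
  have hab : a ≤ b := by nlinarith [Real.sqrt_nonneg r]
  have hg : Measurable g := by fun_prop
  have hg0 : ∀ x ∈ Icc a b, 0 ≤ g x := fun x hx => by
    have : 0 ≤ x := (sq_nonneg _).trans hx.1
    positivity
  have hcancel : ∀ᵐ x, g x • ((x : ℂ) / ((x : ℂ) + p))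
      = (√((x - a) * (b - x)) : ℂ) / ((x : ℂ) + p) / (2 * π * r) := by
    filter_upwards [Measure.ae_ne volume 0] with x hx
    have hxC : (x : ℂ) ≠ 0 := by exact_mod_cast hx
    simp only [g, Complex.real_smul]
    push_cast
    field_simp
  have hcont : ContinuousOn
      (fun x : ℝ => (√((x - a) * (b - x)) : ℂ) / ((x : ℂ) + p) / (2 * π * r)) (Icc a b) :=
    ((Continuous.continuousOn (by fun_prop)).div
      (Continuous.continuousOn (by fun_prop)) hp).div_const _
  have hint : IntegrableOn (fun x => g x • ((x : ℂ) / ((x : ℂ) + p))) (Icc a b) :=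
    hcont.integrableOn_Icc.congr_fun_ae (Filter.EventuallyEq.symm (ae_restrict_of_ae hcancel))
  rw [mpMeasure,
    integral_add_measure ((integrable_dirac (by simp)).smul_measure ENNReal.ofReal_ne_top)
      (integrable_withDensity_ofReal_indicator measurableSet_Icc hg hg0 hint),
    integral_smul_measure, integral_dirac,
    integral_withDensity_ofReal_indicator measurableSet_Icc hg hg0,
    integral_Icc_eq_integral_Ioc, ← intervalIntegral.integral_of_le hab,
    ← intervalIntegral.integral_div]
  simp only [Complex.ofReal_zero, zero_div, smul_zero, zero_add]
  exact intervalIntegral.integral_congr_ae (hcancel.mono fun x hx _ => hx)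

/-- For the Marchenko–Pastur law `μ_MP` with ratio `r` and any
`p ∈ ℂ \ [−λ⁺, −λ⁻]`, one has `∫ x/(x+p) dμ_MP(x) = m(q)/√r` with
`q = −(p+1+r)/√r`. -/
theorem stmt_10 (r : ℝ) (hr : 0 < r) (p : ℂ)
    (hp : ¬(p.im = 0 ∧ -((1 + Real.sqrt r) ^ 2) ≤ p.re ∧ p.re ≤ -((1 - Real.sqrt r) ^ 2))) :
    ∫ x : ℝ, (x : ℂ) / ((x : ℂ) + p) ∂(mpMeasure r)
      = scStieltjes (-(p + 1 + (r : ℂ)) / (Real.sqrt r : ℂ)) / (Real.sqrt r : ℂ) := by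
  have hpx : ∀ x : ℝ, x ∈ Icc ((1 - √r) ^ 2) ((1 + √r) ^ 2) → (x : ℂ) + p ≠ 0 := by
    intro x hx hx0
    have him : p.im = 0 := by simpa using congrArg Complex.im hx0
    have hre : x + p.re = 0 := by simpa using congrArg Complex.re hx0
    exact hp ⟨him, by linarith [hx.2], by linarith [hx.1]⟩
  have hs : 0 < √r := Real.sqrt_pos.2 hr
  have hsq : √r ^ 2 = r := Real.sq_sqrt hr.le
  have hlo : (1 - √r) ^ 2 = 1 + r - 2 * √r := by linear_combination hsq
  have hhi : (1 + √r) ^ 2 = 1 + r + 2 * √r := by linear_combination hsq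
  rw [integral_div_add_mpMeasure hr.le hpx, hlo, hhi, integral_sqrt_div_add_eq_scStieltjes hs]
  have hsC : (√r : ℂ) ≠ 0 := by exact_mod_cast hs.ne'
  have hrC : (r : ℂ) = (√r : ℂ) ^ 2 := by exact_mod_cast hsq.symm
  have hπ : (π : ℂ) ≠ 0 := by exact_mod_cast pi_ne_zero
  rw [Complex.ofReal_add, Complex.ofReal_one, ← add_assoc]
  field_simp
  rw [← hrC, mul_div_cancel_left₀ _ (by exact_mod_cast hr.ne')]
end

section
/- Fix r > 0 and stepsize 0 < γ < 2/r, and set ϱ = ((1+r)/2)(1 − rγ/2) and ω = (1/4)(1 − rγ/2)²(8/γ − (1+r)²). If ω < 0, then ϱ + √|ω| ≤ (1−√r)², with equality if and only if γ = γ* := 2/(√r(r − √r + 1)). -/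
/-!
With `c = 1 − rγ/2 > 0` and `x = √((1+r)² − 8/γ)` we have `√|ω| = c x / 2`, and eliminating
`γ = 8/((1+r)² − x²)` turns `ϱ + √|ω| − (1−√r)²` into `−(x − (1−√r)²)² / (2(1+r−x))`.
Since `x < 1 + r`, this is `≤ 0`, with equality iff `x = (1−√r)²`, which unwinds to `γ = γ*`.
-/

lemma sqrt_abs_quarter_sq_mul {c d : ℝ} (hc : 0 ≤ c) (hd : d ≤ 0) :
    √|1 / 4 * c ^ 2 * d| = c / 2 * √(-d) := by
  have h : |1 / 4 * c ^ 2 * d| = (c / 2) ^ 2 * (-d) := by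
    rw [abs_of_nonpos (mul_nonpos_of_nonneg_of_nonpos (by positivity) hd)]
    ring
  rw [h, Real.sqrt_mul (sq_nonneg _), Real.sqrt_sq (by positivity)]

lemma rate_eq_sq_one_sub_sub_div {r γ s x : ℝ} (hs : s ^ 2 = r) (hx : γ * x ^ 2 = γ * (1 + r) ^ 2 - 8)
    (hxr : x ≠ 1 + r) :
    (1 + r) / 2 * (1 - r * γ / 2) + (1 - r * γ / 2) / 2 * x
      = (1 - s) ^ 2 - (x - (1 - s) ^ 2) ^ 2 / (2 * (1 + r - x)) := by
  have h : 1 + r - x ≠ 0 := sub_ne_zero.2 hxr.symm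
  field_simp
  subst hs
  linear_combination s ^ 2 * hx

lemma eq_sq_one_sub_sqrt_iff {r γ x : ℝ} (hr : 0 < r) (hγ : γ ≠ 0) (hx0 : 0 ≤ x)
    (hx : x ^ 2 = (1 + r) ^ 2 - 8 / γ) :
    x = (1 - √r) ^ 2 ↔ γ = 2 / (√r * (r - √r + 1)) := by
  set s := √r
  have hs : s ^ 2 = r := Real.sq_sqrt hr.le
  have hs0 : 0 < s := Real.sqrt_pos.2 hr
  have hden : 0 < s * (r - s + 1) := by
    have : 0 < r - s + 1 := by nlinarith [sq_nonneg (s - 1)]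
    positivity
  calc x = (1 - s) ^ 2 ↔ x ^ 2 = ((1 - s) ^ 2) ^ 2 := (sq_eq_sq₀ hx0 (sq_nonneg _)).symm
    _ ↔ 8 / γ = 4 * (s * (r - s + 1)) := by
      rw [hx, ← hs]
      constructor <;> intro h <;> linear_combination -h
    _ ↔ γ = 2 / (s * (r - s + 1)) := by
      rw [div_eq_iff hγ, eq_div_iff hden.ne']
      constructor
      · intro h; linear_combination -h / 4
      · intro h; linear_combination -4 * h

/-- For `0 < γ < 2/r`, set `ϱ = ((1+r)/2)(1 − rγ/2)` and
`ω = (1/4)(1 − rγ/2)²(8/γ − (1+r)²)`. If `ω < 0` then `ϱ + √|ω| ≤ (1−√r)²`, with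
equality iff `γ = γ* = 2/(√r(r − √r + 1))`. -/
theorem stmt_11 (r γ : ℝ) (hr : 0 < r) (hγ0 : 0 < γ) (hγ : γ < 2 / r)
    (ϱ ω : ℝ)
    (hϱ : ϱ = (1 + r) / 2 * (1 - r * γ / 2))
    (hω : ω = 1 / 4 * (1 - r * γ / 2) ^ 2 * (8 / γ - (1 + r) ^ 2))
    (hneg : ω < 0) :
    ϱ + Real.sqrt |ω| ≤ (1 - Real.sqrt r) ^ 2 ∧
      (ϱ + Real.sqrt |ω| = (1 - Real.sqrt r) ^ 2 ↔
        γ = 2 / (Real.sqrt r * (r - Real.sqrt r + 1))) := by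
  have hc : 0 < 1 - r * γ / 2 := by
    have := (lt_div_iff₀ hr).mp hγ
    linarith
  have h8 : 8 / γ < (1 + r) ^ 2 := by
    rw [hω] at hneg
    linarith [neg_of_mul_neg_right hneg (by positivity)]
  set x := √((1 + r) ^ 2 - 8 / γ)
  have hx0 : 0 ≤ x := Real.sqrt_nonneg _
  have hx : x ^ 2 = (1 + r) ^ 2 - 8 / γ := Real.sq_sqrt (by linarith)
  have hxr : x < 1 + r := by
    rw [← pow_lt_pow_iff_left₀ hx0 (by positivity) two_ne_zero, hx]
    linarith [div_pos (by norm_num : (0 : ℝ) < 8) hγ0]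
  have hrate : ϱ + √|ω| = (1 - √r) ^ 2 - (x - (1 - √r) ^ 2) ^ 2 / (2 * (1 + r - x)) := by
    rw [hω, sqrt_abs_quarter_sq_mul hc.le (by linarith), neg_sub, hϱ]
    exact rate_eq_sq_one_sub_sub_div (Real.sq_sqrt hr.le) (by rw [hx]; field_simp) hxr.ne
  have hgap : 0 < 2 * (1 + r - x) := by linarith
  rw [hrate, ← eq_sq_one_sub_sqrt_iff hr hγ0.ne' hx0 hx]
  refine ⟨sub_le_self _ (by positivity), ?_⟩
  simp [hgap.ne', sub_eq_zero]
end

section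
/- Fix γ > 0 and λ⁻ > 0, and let ψ₀ solve the Volterra equation ψ₀(t) = z(t) + ∫₀^t γ²r h₂(t−s) ψ₀(s) ds where h₂(t) = ∫ x² e^{−2γtx} dμ(x) and μ is compactly supported in [λ⁻, ∞) away from 0 (Dirac mass at 0 allowed). If γ* < γ < (2/r)(∫x dμ)^{−1} where γ* = (r/2 · ∫ x²/(x−λ⁻) dμ(x))^{−1}, then there exists a unique λ* ∈ (0, λ⁻) solving rγ² ∫₀^∞ e^{2γλ*t} h₂(t) dt = 1, equivalently (r/2)∫₀^∞ x²/(x−λ*) dμ(x) = 1/γ. -/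
/-!
Write `F α = ∫ x² / (x - α) dμ` (`stieltjesSq μ α`). By Fubini,
`∫₀^∞ e^{2γαt} h₂(t) dt = F α / (2γ)` for `α < λ⁻`, so both equations say `F λ* = 2 / (rγ)`.
On `[0, λ⁻)` the function `F` is continuous and strictly increasing, with `F 0 = ∫ x dμ < 2 / (rγ)`.
As `α ↑ λ⁻`, monotone convergence makes `F α` increase either to `+∞` (an atom at `λ⁻` or a
divergent integral) or to `F λ⁻ > 2 / (rγ)`; in both cases `F` crosses `2 / (rγ)` before `λ⁻`,
and the intermediate value theorem together with strict monotonicity gives `λ*`.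
-/

open MeasureTheory Set Filter Topology
open scoped ENNReal

noncomputable def stieltjesSq (μ : Measure ℝ) (α : ℝ) : ℝ :=
  ∫ x, x ^ 2 / (x - α) ∂μ

section Pointwise

variable {a B α β x : ℝ}

theorem sq_div_sub_nonneg (hx : x = 0 ∨ α ≤ x) : 0 ≤ x ^ 2 / (x - α) := by
  rcases hx with rfl | hx
  · simp
  · exact div_nonneg (sq_nonneg x) (sub_nonneg.2 hx)

theorem sq_div_sub_le (ha : 0 ≤ a) (hα : α < a) (hx : x = 0 ∨ x ∈ Icc a B) :
    x ^ 2 / (x - α) ≤ B ^ 2 / (a - α) := by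
  have hpos : 0 < a - α := sub_pos.2 hα
  rcases hx with rfl | ⟨hax, hxB⟩
  · simpa using div_nonneg (sq_nonneg B) hpos.le
  · calc x ^ 2 / (x - α) ≤ x ^ 2 / (a - α) := by gcongr
      _ ≤ B ^ 2 / (a - α) := by gcongr; linarith

theorem sq_div_sub_le_sq_div_sub (hαβ : α ≤ β) (hx : x = 0 ∨ β < x) :
    x ^ 2 / (x - α) ≤ x ^ 2 / (x - β) := by
  rcases hx with rfl | hx
  · simp
  · gcongr

theorem sq_div_sub_lt_sq_div_sub (hx : x ≠ 0) (hαβ : α < β) (hβx : β < x) :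
    x ^ 2 / (x - α) < x ^ 2 / (x - β) :=
  div_lt_div_of_pos_left (by positivity) (by linarith) (by linarith)

theorem iSup_ofReal_sq_div_sub {u : ℕ → ℝ} (hu : Monotone u) (hu_lt : ∀ n, u n < a)
    (hu_lim : Tendsto u atTop (𝓝 a)) (hx : x = 0 ∨ a < x) :
    ⨆ n, ENNReal.ofReal (x ^ 2 / (x - u n)) = ENNReal.ofReal (x ^ 2 / (x - a)) := by
  rcases hx with rfl | hx
  · simp
  refine tendsto_nhds_unique (tendsto_atTop_iSup fun m n hmn => ENNReal.ofReal_le_ofReal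
    (sq_div_sub_le_sq_div_sub (hu hmn) (Or.inr ((hu_lt n).trans hx)))) ?_
  exact ENNReal.tendsto_ofReal
    (tendsto_const_nhds.div (tendsto_const_nhds.sub hu_lim) (sub_pos.2 hx).ne')

theorem iSup_ofReal_sq_div_sub_self {u : ℕ → ℝ} (ha : a ≠ 0) (hu : Monotone u)
    (hu_lt : ∀ n, u n < a) (hu_lim : Tendsto u atTop (𝓝 a)) :
    ⨆ n, ENNReal.ofReal (a ^ 2 / (a - u n)) = ⊤ := by
  have h_gap : Tendsto (fun n => a - u n) atTop (𝓝[>] 0) :=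
    tendsto_nhdsWithin_iff.2 ⟨by simpa using (tendsto_const_nhds (x := a)).sub hu_lim,
      Eventually.of_forall fun n => sub_pos.2 (hu_lt n)⟩
  have h_top : Tendsto (fun n => a ^ 2 / (a - u n)) atTop atTop := by
    simpa [div_eq_mul_inv] using h_gap.inv_tendsto_nhdsGT_zero.const_mul_atTop (by positivity)
  exact tendsto_nhds_unique (tendsto_atTop_iSup fun m n hmn => ENNReal.ofReal_le_ofReal
    (sq_div_sub_le_sq_div_sub (hu hmn) (Or.inr (hu_lt n))))
    (ENNReal.tendsto_ofReal_atTop.comp h_top)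

end Pointwise

theorem ae_eq_zero_or_mem_Icc {μ : Measure ℝ} {a B : ℝ} (hneg : μ (Iio 0) = 0)
    (hgap : μ (Ioo 0 a) = 0) (hB : μ (Ioi B) = 0) : ∀ᵐ x ∂μ, x = 0 ∨ x ∈ Icc a B := by
  refine measure_mono_null (fun x hx => ?_)
    (measure_union_null (measure_union_null hneg hgap) hB)
  simp only [mem_Icc] at hx
  simp only [mem_union, mem_Iio, mem_Ioo, mem_Ioi]
  grind

section Transform

variable {μ : Measure ℝ} {a B : ℝ}

theorem stieltjesSq_zero : stieltjesSq μ 0 = ∫ x, x ∂μ := by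
  refine integral_congr_ae (Eventually.of_forall fun x => ?_)
  rcases eq_or_ne x 0 with rfl | hx
  · simp
  · simp [sq, hx]

theorem stieltjesSq_nonneg (hsupp : ∀ᵐ x ∂μ, x = 0 ∨ x ∈ Icc a B) {α : ℝ} (hα : α ≤ a) :
    0 ≤ stieltjesSq μ α :=
  integral_nonneg_of_ae <| by
    filter_upwards [hsupp] with x hx
    exact sq_div_sub_nonneg (hx.imp_right fun h => hα.trans h.1)

variable [IsFiniteMeasure μ]

theorem integrable_sq_div_sub (ha : 0 ≤ a)
    (hsupp : ∀ᵐ x ∂μ, x = 0 ∨ x ∈ Icc a B) {α : ℝ} (hα : α < a) :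
    Integrable (fun x => x ^ 2 / (x - α)) μ := by
  refine Integrable.mono' (integrable_const (B ^ 2 / (a - α)))
    (Measurable.aestronglyMeasurable (by fun_prop)) ?_
  filter_upwards [hsupp] with x hx
  rw [Real.norm_of_nonneg (sq_div_sub_nonneg (hx.imp_right fun h => hα.le.trans h.1))]
  exact sq_div_sub_le ha hα hx

theorem stieltjesSq_strictMonoOn (ha : 0 < a) (hsupp : ∀ᵐ x ∂μ, x = 0 ∨ x ∈ Icc a B)
    (hmass : μ (Ici a) ≠ 0) :
    StrictMonoOn (stieltjesSq μ) (Iio a) := by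
  intro α hα β hβ hαβ
  have hα_int := integrable_sq_div_sub ha.le hsupp hα
  have hβ_int := integrable_sq_div_sub ha.le hsupp hβ
  have hdiff : 0 < ∫ x, (x ^ 2 / (x - β) - x ^ 2 / (x - α)) ∂μ := by
    refine (integral_pos_iff_support_of_nonneg_ae ?_ (hβ_int.sub hα_int)).2 ?_
    · filter_upwards [hsupp] with x hx
      exact sub_nonneg.2 (sq_div_sub_le_sq_div_sub hαβ.le
        (hx.imp_right fun h => (mem_Iio.1 hβ).trans_le h.1))
    · refine pos_iff_ne_zero.2 (mt (measure_mono_null fun x hx => ?_) hmass)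
      exact (sub_pos.2 (sq_div_sub_lt_sq_div_sub (ha.trans_le hx).ne' hαβ
        ((mem_Iio.1 hβ).trans_le hx))).ne'
  rw [integral_sub hβ_int hα_int] at hdiff
  exact sub_pos.1 hdiff

theorem continuousOn_stieltjesSq (ha : 0 ≤ a) (hsupp : ∀ᵐ x ∂μ, x = 0 ∨ x ∈ Icc a B) {b : ℝ}
    (hb : b < a) : ContinuousOn (stieltjesSq μ) (Iic b) := by
  refine continuousOn_of_dominated (bound := fun _ => B ^ 2 / (a - b))
    (fun α _ => Measurable.aestronglyMeasurable (by fun_prop)) (fun α hα => ?_)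
    (integrable_const _) ?_
  · have hαa : α < a := (mem_Iic.1 hα).trans_lt hb
    filter_upwards [hsupp] with x hx
    rw [Real.norm_of_nonneg (sq_div_sub_nonneg (hx.imp_right fun h => hαa.le.trans h.1))]
    exact (sq_div_sub_le ha hαa hx).trans <|
      div_le_div_of_nonneg_left (sq_nonneg B) (sub_pos.2 hb) (by linarith [mem_Iic.1 hα])
  · filter_upwards [hsupp] with x hx
    rcases hx with rfl | ⟨hax, -⟩
    · simpa using continuousOn_const
    · exact continuousOn_const.div (continuousOn_const.sub continuousOn_id) fun α hα =>
        (sub_pos.2 ((mem_Iic.1 hα).trans_lt (hb.trans_le hax))).ne'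

theorem setIntegral_exp_mul_integral_sq_mul_exp (ha : 0 ≤ a)
    (hsupp : ∀ᵐ x ∂μ, x = 0 ∨ x ∈ Icc a B) {k l : ℝ} (hk : 0 < k) (hl : l < a) :
    ∫ t in Ioi 0, Real.exp (k * l * t) * ∫ x, x ^ 2 * Real.exp (-(k * t * x)) ∂μ =
      stieltjesSq μ l / k := by
  set φ : ℝ → ℝ → ℝ := fun t x => x ^ 2 * Real.exp (-(k * (x - l)) * t)
  have h_inner : ∀ t, Real.exp (k * l * t) * ∫ x, x ^ 2 * Real.exp (-(k * t * x)) ∂μ =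
      ∫ x, φ t x ∂μ := fun t => by
    rw [← integral_const_mul]
    refine integral_congr_ae (Eventually.of_forall fun x => ?_)
    simp only [φ]
    rw [mul_left_comm, ← Real.exp_add]
    ring_nf
  have h_int : Integrable (Function.uncurry φ) ((volume.restrict (Ioi 0)).prod μ) := by
    have h_bound : Integrable (fun z : ℝ × ℝ => B ^ 2 * Real.exp (-(k * (a - l)) * z.1))
        ((volume.restrict (Ioi 0)).prod μ) :=
      ((integrableOn_exp_mul_Ioi (by nlinarith) 0).const_mul _).comp_fst μ
    refine h_bound.mono' (Continuous.aestronglyMeasurable (by fun_prop)) ?_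
    filter_upwards [Measure.quasiMeasurePreserving_fst.ae (ae_restrict_mem measurableSet_Ioi),
      Measure.quasiMeasurePreserving_snd.ae hsupp] with z hz1 hz2
    obtain ⟨t, x⟩ := z
    rcases hz2 with rfl | ⟨hax, hxB⟩
    · simp only [Function.uncurry_apply_pair, φ]
      rw [zero_pow two_ne_zero, zero_mul, norm_zero]
      positivity
    · simp only [Function.uncurry_apply_pair, φ, norm_mul, Real.norm_eq_abs, abs_pow,
        Real.abs_exp, sq_abs]
      have ht : 0 < t := hz1
      gcongr; nlinarith
  have h_time : ∀ᵐ x ∂μ, ∫ t in Ioi 0, φ t x = x ^ 2 / (x - l) / k := by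
    filter_upwards [hsupp] with x hx
    rcases hx with rfl | ⟨hax, -⟩
    · simp [φ]
    · have hxl : 0 < k * (x - l) := mul_pos hk (by linarith)
      rw [integral_const_mul, integral_exp_mul_Ioi (neg_lt_zero.2 hxl), mul_zero,
        Real.exp_zero]
      field_simp
  calc ∫ t in Ioi 0, Real.exp (k * l * t) * ∫ x, x ^ 2 * Real.exp (-(k * t * x)) ∂μ
      = ∫ t in Ioi 0, ∫ x, φ t x ∂μ := by simp only [h_inner]
    _ = ∫ x, (∫ t in Ioi 0, φ t x) ∂μ := integral_integral_swap h_int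
    _ = stieltjesSq μ l / k := by rw [integral_congr_ae h_time, integral_div]; rfl

theorem stieltjesSq_eq_ciSup (ha : 0 < a) (hsupp : ∀ᵐ x ∂μ, x = 0 ∨ x ∈ Icc a B) {u : ℕ → ℝ}
    (hu : Monotone u) (hu_lt : ∀ n, u n < a) (hu_lim : Tendsto u atTop (𝓝 a))
    (hbdd : BddAbove (range fun n => stieltjesSq μ (u n))) :
    stieltjesSq μ a = ⨆ n, stieltjesSq μ (u n) := by
  set f : ℕ → ℝ → ℝ≥0∞ := fun n x => ENNReal.ofReal (x ^ 2 / (x - u n))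
  have hf_meas : ∀ n, AEMeasurable (f n) μ := fun n =>
    (Measurable.ennreal_ofReal (by fun_prop)).aemeasurable
  have hf_mono : ∀ᵐ x ∂μ, Monotone fun n => f n x := by
    filter_upwards [hsupp] with x hx m n hmn
    exact ENNReal.ofReal_le_ofReal
      (sq_div_sub_le_sq_div_sub (hu hmn) (hx.imp_right fun h => (hu_lt n).trans_le h.1))
  have hf_lint : ∀ n, ∫⁻ x, f n x ∂μ = ENNReal.ofReal (stieltjesSq μ (u n)) := fun n => by
    refine (ofReal_integral_eq_lintegral_ofReal
      (integrable_sq_div_sub ha.le hsupp (hu_lt n)) ?_).symm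
    filter_upwards [hsupp] with x hx
    exact sq_div_sub_nonneg (hx.imp_right fun h => (hu_lt n).le.trans h.1)
  have h_lint : ∫⁻ x, ⨆ n, f n x ∂μ = ⨆ n, ENNReal.ofReal (stieltjesSq μ (u n)) := by
    rw [lintegral_iSup' hf_meas hf_mono]
    simp only [hf_lint]
  have h_fin : ⨆ n, ENNReal.ofReal (stieltjesSq μ (u n)) ≠ ⊤ := by
    obtain ⟨c, hc⟩ := hbdd
    exact ne_top_of_le_ne_top ENNReal.ofReal_ne_top
      (iSup_le fun n => ENNReal.ofReal_le_ofReal (hc ⟨n, rfl⟩))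
  have h_lim : ∀ᵐ x ∂μ, ⨆ n, f n x = ENNReal.ofReal (x ^ 2 / (x - a)) := by
    filter_upwards [hsupp, ae_lt_top' (AEMeasurable.iSup hf_meas) (h_lint ▸ h_fin)]
      with x hx hx_fin
    rcases hx with rfl | ⟨hax, -⟩
    · exact iSup_ofReal_sq_div_sub hu hu_lt hu_lim (Or.inl rfl)
    rcases hax.eq_or_lt with rfl | hax
    · exact absurd (iSup_ofReal_sq_div_sub_self ha.ne' hu hu_lt hu_lim) hx_fin.ne
    · exact iSup_ofReal_sq_div_sub hu hu_lt hu_lim (Or.inr hax)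
  have h_nonneg : ∀ᵐ x ∂μ, 0 ≤ x ^ 2 / (x - a) := by
    filter_upwards [hsupp] with x hx
    exact sq_div_sub_nonneg (hx.imp_right fun h => h.1)
  calc stieltjesSq μ a = (∫⁻ x, ENNReal.ofReal (x ^ 2 / (x - a)) ∂μ).toReal :=
        integral_eq_lintegral_of_nonneg_ae h_nonneg
          (Measurable.aestronglyMeasurable (by fun_prop))
    _ = (⨆ n, ENNReal.ofReal (stieltjesSq μ (u n))).toReal := by
        rw [← lintegral_congr_ae h_lim, h_lint]
    _ = ⨆ n, stieltjesSq μ (u n) := by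
        rw [ENNReal.toReal_iSup fun n => ENNReal.ofReal_ne_top]
        exact congrArg iSup (funext fun n =>
          ENNReal.toReal_ofReal (stieltjesSq_nonneg hsupp (hu_lt n).le))

-- `stieltjesSq μ a` is a junk `0` when `x ^ 2 / (x - a)` is not integrable, hence the form of `hc`.
theorem exists_lt_stieltjesSq (ha : 0 < a) (hsupp : ∀ᵐ x ∂μ, x = 0 ∨ x ∈ Icc a B)
    (hmass : μ (Ici a) ≠ 0) {c : ℝ} (hc : 0 < stieltjesSq μ a → c < stieltjesSq μ a) :
    ∃ α ∈ Ioo 0 a, c < stieltjesSq μ α := by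
  by_contra! h
  obtain ⟨u, hu, hu_mem, hu_lim⟩ := exists_seq_strictMono_tendsto' ha
  have hbdd : BddAbove (range fun n => stieltjesSq μ (u n)) :=
    ⟨c, forall_mem_range.2 fun n => h _ (hu_mem n)⟩
  have h_eq := stieltjesSq_eq_ciSup ha hsupp hu.monotone (fun n => (hu_mem n).2) hu_lim hbdd
  have h_pos : 0 < stieltjesSq μ a :=
    calc 0 ≤ stieltjesSq μ 0 := stieltjesSq_nonneg hsupp ha.le
      _ < stieltjesSq μ (u 0) :=
        stieltjesSq_strictMonoOn ha hsupp hmass ha (hu_mem 0).2 (hu_mem 0).1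
      _ ≤ stieltjesSq μ a := h_eq ▸ le_ciSup hbdd 0
  have h_le : stieltjesSq μ a ≤ c := h_eq ▸ ciSup_le fun n => h _ (hu_mem n)
  exact (hc h_pos).not_ge h_le

end Transform

/-- existence and uniqueness of the Malthusian exponent. Let `μ` be a
compactly supported probability measure supported in `{0} ∪ [λ⁻, ∞)` with `λ⁻ > 0`, and
`h₂(t) = ∫ x² e^{−2γtx} dμ(x)`. If `γ* < γ < (2/r)(∫ x dμ)⁻¹` where
`γ* = ((r/2)∫ x²/(x−λ⁻) dμ)⁻¹`, then there is a unique `λ* ∈ (0, λ⁻)` with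
`rγ² ∫₀^∞ e^{2γλ*t} h₂(t) dt = 1`, equivalently `(r/2)∫ x²/(x−λ*) dμ = 1/γ`. -/
theorem stmt_13 (μ : Measure ℝ) [IsProbabilityMeasure μ]
    (r γ lamMinus : ℝ) (hr : 0 < r) (hγ0 : 0 < γ) (hlam : 0 < lamMinus)
    (hneg : μ (Set.Iio 0) = 0) (hgap : μ (Set.Ioo 0 lamMinus) = 0)
    (hmass : 0 < μ (Set.Ici lamMinus)) (B : ℝ) (hB : μ (Set.Ioi B) = 0)
    (h₂ : ℝ → ℝ) (hh₂ : ∀ t, h₂ t = ∫ x, x ^ 2 * Real.exp (-(2 * γ * t * x)) ∂μ)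
    (hγlow : (r / 2 * ∫ x, x ^ 2 / (x - lamMinus) ∂μ)⁻¹ < γ)
    (hγhigh : γ < 2 / r * (∫ x, x ∂μ)⁻¹) :
    ∃! lamStar : ℝ, 0 < lamStar ∧ lamStar < lamMinus ∧
      r * γ ^ 2 * ∫ t in Set.Ioi (0 : ℝ), Real.exp (2 * γ * lamStar * t) * h₂ t = 1 ∧
      r / 2 * ∫ x, x ^ 2 / (x - lamStar) ∂μ = 1 / γ := by
  have hsupp := ae_eq_zero_or_mem_Icc hneg hgap hB
  have hmass' : μ (Ici lamMinus) ≠ 0 := hmass.ne'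
  set c := 2 / (r * γ) with hc
  have h_eq_iff : ∀ l, r / 2 * stieltjesSq μ l = 1 / γ ↔ stieltjesSq μ l = c := fun l => by
    rw [hc]
    constructor <;> intro h <;> field_simp at h ⊢ <;> linarith
  have h_zero : stieltjesSq μ 0 < c := by
    have h_mean : 0 ≤ ∫ x, x ∂μ := stieltjesSq_zero ▸ stieltjesSq_nonneg hsupp hlam.le
    rcases h_mean.eq_or_lt with h_mean | h_mean
    · rw [← h_mean, inv_zero, mul_zero] at hγhigh
      exact absurd hγhigh hγ0.not_gt
    rw [stieltjesSq_zero, hc, lt_div_iff₀ (by positivity)]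
    rw [lt_mul_inv_iff₀ h_mean, lt_div_iff₀ hr] at hγhigh
    linarith
  have h_far : 0 < stieltjesSq μ lamMinus → c < stieltjesSq μ lamMinus := fun h_pos => by
    change (r / 2 * stieltjesSq μ lamMinus)⁻¹ < γ at hγlow
    rw [inv_lt_iff_one_lt_mul₀ (mul_pos (by positivity) h_pos)] at hγlow
    rw [hc, div_lt_iff₀ (by positivity)]
    linarith
  obtain ⟨α₀, hα₀, hcα₀⟩ := exists_lt_stieltjesSq hlam hsupp hmass' h_far
  obtain ⟨l, hl, hFl⟩ := intermediate_value_Icc hα₀.1.le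
    ((continuousOn_stieltjesSq hlam.le hsupp hα₀.2).mono Icc_subset_Iic_self)
    ⟨h_zero.le, hcα₀.le⟩
  have hl_pos : 0 < l := hl.1.lt_of_ne (by rintro rfl; exact h_zero.ne hFl)
  have hl_lt : l < lamMinus := hl.2.trans_lt hα₀.2
  refine ⟨l, ⟨hl_pos, hl_lt, ?_, (h_eq_iff l).2 hFl⟩, ?_⟩
  · simp only [hh₂]
    rw [setIntegral_exp_mul_integral_sq_mul_exp hlam.le hsupp (by positivity) hl_lt, hFl, hc]
    field_simp
  · rintro y ⟨-, hy_lt, -, hy⟩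
    exact (stieltjesSq_strictMonoOn hlam hsupp hmass').injOn hy_lt hl_lt
      (((h_eq_iff y).1 hy).trans hFl.symm)
end
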